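/- Let h : ℝᵐ → ℝ be convex and L_h-Lipschitz, and let c : ℝⁿ → ℝᵐ be differentiable with L_c-Lipschitz derivative (Jacobian). Then the composition f = h ∘ c is (L_h · L_c)-weakly convex. -/

import Mathlib

open Set

lemma quad_id {E : Type*} [NormedAddCommGroup E] [InnerProductSpace ℝ E]
    (x y : E) (a b : ℝ) (hab : a + b = 1) :
    a * ‖x‖ ^ 2 + b * ‖y‖ ^ 2 - ‖a • x + b • y‖ ^ 2 = a * b * ‖x - y‖ ^ 2 := by
  have hb : b = 1 - a := by linarith
  subst hb
  simp only [← real_inner_self_eq_norm_sq, inner_add_add_self, inner_sub_sub_self,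
    real_inner_smul_left, real_inner_smul_right]
  ring

lemma taylor_bound {n m : ℕ}
    (c : EuclideanSpace ℝ (Fin n) → EuclideanSpace ℝ (Fin m))
    (c' : EuclideanSpace ℝ (Fin n) →
      (EuclideanSpace ℝ (Fin n) →L[ℝ] EuclideanSpace ℝ (Fin m)))
    (Lc : ℝ)
    (hdiff : ∀ x, HasFDerivAt c (c' x) x)
    (hJlip : ∀ x y, ‖c' x - c' y‖ ≤ Lc * ‖x - y‖)
    (x y : EuclideanSpace ℝ (Fin n)) :
    ‖c y - c x - c' x (y - x)‖ ≤ Lc * ‖y - x‖ ^ 2 / 2 := by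
  set v := y - x with hv
  set φ : ℝ → EuclideanSpace ℝ (Fin m) :=
    fun t => c (x + t • v) - c x - t • (c' x v) with hφdef
  have hφ : ∀ t : ℝ, HasDerivAt φ (c' (x + t • v) v - c' x v) t := by
    intro t
    have h1 : HasDerivAt (fun t : ℝ => x + t • v) v t := by
      simpa using ((hasDerivAt_id t).smul_const v).const_add x
    have h2 : HasDerivAt (fun t : ℝ => c (x + t • v)) (c' (x + t • v) v) t :=
      (hdiff (x + t • v)).comp_hasDerivAt t h1
    have h3 : HasDerivAt (fun t : ℝ => t • (c' x v)) (c' x v) t := by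
      simpa using (hasDerivAt_id t).smul_const (c' x v)
    exact (h2.sub_const (c x)).sub h3
  have hcont : ContinuousOn φ (Icc (0:ℝ) 1) :=
    fun t _ => (hφ t).continuousAt.continuousWithinAt
  have hderiv : ∀ t ∈ Ico (0:ℝ) 1,
      HasDerivWithinAt φ (c' (x + t • v) v - c' x v) (Ici t) t :=
    fun t _ => (hφ t).hasDerivWithinAt
  have ha : ‖φ 0‖ ≤ Lc * ‖v‖ ^ 2 / 2 * 0 ^ 2 := by simp [hφdef]
  have hB : ∀ t : ℝ, HasDerivAt (fun t : ℝ => Lc * ‖v‖ ^ 2 / 2 * t ^ 2)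
      (Lc * ‖v‖ ^ 2 * t) t := by
    intro t
    have := (hasDerivAt_pow 2 t).const_mul (Lc * ‖v‖ ^ 2 / 2)
    refine this.congr_deriv ?_
    norm_num
    ring
  have bound : ∀ t ∈ Ico (0:ℝ) 1,
      ‖c' (x + t • v) v - c' x v‖ ≤ Lc * ‖v‖ ^ 2 * t := by
    intro t ht
    have h1 : ‖c' (x + t • v) v - c' x v‖ ≤ ‖c' (x + t • v) - c' x‖ * ‖v‖ := by
      simpa using (c' (x + t • v) - c' x).le_opNorm v
    have h2 : ‖c' (x + t • v) - c' x‖ ≤ Lc * (t * ‖v‖) := by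
      have := hJlip (x + t • v) x
      simpa [norm_smul, abs_of_nonneg ht.1] using this
    calc ‖c' (x + t • v) v - c' x v‖ ≤ (Lc * (t * ‖v‖)) * ‖v‖ :=
          h1.trans (mul_le_mul_of_nonneg_right h2 (norm_nonneg v))
      _ = Lc * ‖v‖ ^ 2 * t := by ring
  have key := image_norm_le_of_norm_deriv_right_le_deriv_boundary
    hcont hderiv ha hB bound (x := 1) (by norm_num)
  simpa [hφdef, hv] using key

theorem composite_is_weakly_convex
    {n m : ℕ} (h : EuclideanSpace ℝ (Fin m) → ℝ)
    (c : EuclideanSpace ℝ (Fin n) → EuclideanSpace ℝ (Fin m))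
    (c' : EuclideanSpace ℝ (Fin n) →
      (EuclideanSpace ℝ (Fin n) →L[ℝ] EuclideanSpace ℝ (Fin m)))
    (Lh Lc : ℝ) (hLh : 0 ≤ Lh) (hLc : 0 ≤ Lc)
    (hconv : ConvexOn ℝ Set.univ h)
    (hlip : LipschitzWith (Real.toNNReal Lh) h)
    (hdiff : ∀ x, HasFDerivAt c (c' x) x)
    (hJlip : ∀ x y, ‖c' x - c' y‖ ≤ Lc * ‖x - y‖) :
    ConvexOn ℝ Set.univ (fun x => h (c x) + Lh * Lc / 2 * ‖x‖ ^ 2) := by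
  refine ⟨convex_univ, fun x _ y _ a b ha hb hab => ?_⟩
  set z := a • x + b • y with hz
  -- comparison of c z with the affine combination
  have hx' : x - z = b • (x - y) := by
    rw [hz]; rw [show (b:ℝ) = 1 - a by linarith]; module
  have hy' : y - z = a • (y - x) := by
    rw [hz]; rw [show (a:ℝ) = 1 - b by linarith]; module
  have hcomb : a • c x + b • c y - c z =
      a • (c x - c z - c' z (x - z)) + b • (c y - c z - c' z (y - z)) := by
    have hlin : a • (c' z (x - z)) + b • (c' z (y - z)) = 0 := by
      rw [← (c' z).map_smul, ← (c' z).map_smul, ← (c' z).map_add]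
      have : a • (x - z) + b • (y - z) = 0 := by
        rw [hx', hy', smul_smul, smul_smul]
        rw [show a * b = b * a by ring]
        module
      rw [this, (c' z).map_zero]
    have formal : a • c x + b • c y - c z =
        a • (c x - c z - c' z (x - z)) + b • (c y - c z - c' z (y - z)) +
          (a • (c' z (x - z)) + b • (c' z (y - z))) + ((a + b) - 1) • c z := by
      module
    rw [formal, hlin, hab]
    simp
  -- Taylor bounds
  have hTx := taylor_bound c c' Lc hdiff hJlip z x
  have hTy := taylor_bound c c' Lc hdiff hJlip z y
  have hnx : ‖x - z‖ ^ 2 = b ^ 2 * ‖x - y‖ ^ 2 := by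
    rw [hx', norm_smul, Real.norm_eq_abs, abs_of_nonneg hb, mul_pow]
  have hny : ‖y - z‖ ^ 2 = a ^ 2 * ‖x - y‖ ^ 2 := by
    rw [hy', norm_smul, Real.norm_eq_abs, abs_of_nonneg ha, mul_pow,
      norm_sub_rev]
  have hdist : ‖a • c x + b • c y - c z‖ ≤ Lc * (a * b * ‖x - y‖ ^ 2) / 2 := by
    rw [hcomb]
    calc ‖a • (c x - c z - c' z (x - z)) + b • (c y - c z - c' z (y - z))‖
        ≤ ‖a • (c x - c z - c' z (x - z))‖ + ‖b • (c y - c z - c' z (y - z))‖ :=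
          norm_add_le _ _
      _ = a * ‖c x - c z - c' z (x - z)‖ + b * ‖c y - c z - c' z (y - z)‖ := by
          rw [norm_smul, norm_smul, Real.norm_eq_abs, Real.norm_eq_abs,
            abs_of_nonneg ha, abs_of_nonneg hb]
      _ ≤ a * (Lc * ‖x - z‖ ^ 2 / 2) + b * (Lc * ‖y - z‖ ^ 2 / 2) := by
          gcongr
      _ = Lc * (a * b * ‖x - y‖ ^ 2) / 2 := by
          rw [hnx, hny]; linear_combination (Lc * ‖x - y‖ ^ 2 * a * b / 2) * hab
  -- Lipschitz step
  have hLip : h (c z) - h (a • c x + b • c y) ≤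
      Lh * ‖a • c x + b • c y - c z‖ := by
    have := hlip.dist_le_mul (c z) (a • c x + b • c y)
    rw [Real.coe_toNNReal Lh hLh, Real.dist_eq, dist_eq_norm] at this
    calc h (c z) - h (a • c x + b • c y) ≤ |h (c z) - h (a • c x + b • c y)| :=
          le_abs_self _
      _ ≤ Lh * ‖c z - (a • c x + b • c y)‖ := this
      _ = Lh * ‖a • c x + b • c y - c z‖ := by rw [norm_sub_rev]
  -- convexity of h
  have hhc : h (a • c x + b • c y) ≤ a * h (c x) + b * h (c y) :=
    hconv.2 (mem_univ _) (mem_univ _) ha hb hab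
  -- quadratic identity
  have hq := quad_id x y a b hab
  have habLc : Lh * ‖a • c x + b • c y - c z‖ ≤
      Lh * (Lc * (a * b * ‖x - y‖ ^ 2) / 2) :=
    mul_le_mul_of_nonneg_left hdist hLh
  have hq2 : Lh * Lc / 2 * ‖z‖ ^ 2 =
      Lh * Lc / 2 * (a * ‖x‖ ^ 2 + b * ‖y‖ ^ 2) -
        Lh * Lc / 2 * (a * b * ‖x - y‖ ^ 2) := by
    rw [hz]; linear_combination (-(Lh * Lc / 2)) * hq
  simp only [smul_eq_mul]
  linarith [hq2, hLip, hhc, habLc]
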